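/- For all natural numbers n ≥ 1 and real parameters γ, μ and real x (with μ ≠ 0, 1 and Pochhammer denominators nonzero), the Meixner polynomials satisfy the difference equation (xμ + μγ + x − n + nμ)·M_n^{(γ,μ)}(x) − μ(γ + x)·M_n^{(γ,μ)}(x+1) − x·M_n^{(γ,μ)}(x−1) = 0. -/
import Mathlib


/-- Rising factorial `(a)_k = a(a+1)⋯(a+k-1)`. -/
noncomputable def rf (a : ℝ) (k : ℕ) : ℝ := ∏ j ∈ Finset.range k, (a + j)

/-- Monic Meixner polynomials
`M_n^{(γ,μ)}(x) = (γ)_n (μ/(μ-1))^n ∑_{k=0}^n ((-n)_k (-x)_k / ((γ)_k k!)) (1 - 1/μ)^k`. -/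
noncomputable def meixner (γ μ : ℝ) (n : ℕ) (x : ℝ) : ℝ :=
  rf γ n * (μ / (μ - 1)) ^ n *
    ∑ k ∈ Finset.range (n + 1),
      rf (-(n : ℝ)) k * rf (-x) k / (rf γ k * (k.factorial : ℝ)) * (1 - 1 / μ) ^ k

lemma rf_zero (a : ℝ) : rf a 0 = 1 := by simp [rf]

lemma rf_succ (a : ℝ) (k : ℕ) : rf a (k + 1) = rf a k * (a + k) := by
  simp [rf, Finset.prod_range_succ]

lemma rf_succ' (a : ℝ) (k : ℕ) : rf a (k + 1) = a * rf (a + 1) k := by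
  rw [rf, rf, Finset.prod_range_succ']
  rw [Finset.prod_congr rfl (fun j _ => by push_cast; ring_nf :
    ∀ j ∈ Finset.range k, (a + ((j : ℕ) + 1 : ℕ) : ℝ) = (a + 1) + (j : ℝ))]
  push_cast
  ring

/-- structure relation -/
lemma neg_x_shift (x : ℝ) (k : ℕ) : (-x) * rf (1 - x) k = rf (-x) k * (-x + k) := by
  have h1 := rf_succ' (-x) k
  have h2 := rf_succ (-x) k
  rw [show -x + 1 = 1 - x by ring] at h1
  rw [← h1, h2]

lemma star (n : ℕ) (γ μ x : ℝ) (k : ℕ) :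
    (x * μ + μ * γ + x - n + n * μ) * rf (-x) k - μ * (γ + x) * rf (-x - 1) k
      - x * rf (1 - x) k
    = (1 - μ) * ((k : ℝ) - n) * rf (-x) k + μ * k * (γ + k - 1) * rf (-x) (k - 1) := by
  cases k with
  | zero => simp [rf_zero]; ring
  | succ k =>
    have h1 : rf (-x) (k + 1) = rf (-x) k * (-x + k) := rf_succ _ _
    have h2 : rf (-x - 1) (k + 1) = (-x - 1) * rf (-x) k := by
      have := rf_succ' (-x - 1) k
      rw [show -x - 1 + 1 = -x by ring] at this
      exact this
    have h3 : rf (1 - x) (k + 1) = rf (1 - x) k * (1 - x + k) := by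
      have := rf_succ (1 - x) k
      rw [show 1 - x + (k : ℝ) = 1 - x + k by ring] at this
      exact this
    have h4 := neg_x_shift x k
    simp only [Nat.add_sub_cancel, h1, h2, h3]
    push_cast
    linear_combination (1 - x + (k : ℝ)) * h4

theorem meixner_difference_equation (n : ℕ) (hn : 1 ≤ n) (γ μ x : ℝ)
    (hμ0 : μ ≠ 0) (hμ1 : μ ≠ 1) (hγ : ∀ k ≤ n, rf γ k ≠ 0) :
    (x * μ + μ * γ + x - n + n * μ) * meixner γ μ n x -
      μ * (γ + x) * meixner γ μ n (x + 1) - x * meixner γ μ n (x - 1) = 0 := by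
  set t : ℝ := 1 - 1 / μ with ht
  set c : ℕ → ℝ := fun k => rf (-(n : ℝ)) k / (rf γ k * k.factorial) * t ^ k with hc
  have hrec : ∀ k < n, c (k + 1) * ((k : ℝ) + 1) * (γ + k) = c k * ((k : ℝ) - n) * t := by
    intro k hk
    have hγk : rf γ k ≠ 0 := hγ k (le_of_lt hk)
    have hγk1 : rf γ (k + 1) ≠ 0 := hγ (k + 1) hk
    have hγkk : γ + (k : ℝ) ≠ 0 := by
      intro h
      apply hγk1
      rw [rf_succ, h, mul_zero]
    have hfact : (k.factorial : ℝ) ≠ 0 := Nat.cast_ne_zero.mpr k.factorial_ne_zero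
    simp only [hc]
    rw [rf_succ (-(n : ℝ)) k, rf_succ γ k, Nat.factorial_succ]
    push_cast
    field_simp
    ring
  have key : ∑ k ∈ Finset.range (n + 1),
      c k * ((x * μ + μ * γ + x - n + n * μ) * rf (-x) k - μ * (γ + x) * rf (-x - 1) k
        - x * rf (1 - x) k) = 0 := by
    have hsplit : ∀ k ∈ Finset.range (n + 1),
        c k * ((x * μ + μ * γ + x - n + n * μ) * rf (-x) k - μ * (γ + x) * rf (-x - 1) k
          - x * rf (1 - x) k)
        = c k * ((1 - μ) * ((k : ℝ) - n) * rf (-x) k)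
          + c k * (μ * k * (γ + k - 1) * rf (-x) (k - 1)) := by
      intro k _
      rw [star n γ μ x k]; ring
    rw [Finset.sum_congr rfl hsplit, Finset.sum_add_distrib]
    have hS1 : ∑ k ∈ Finset.range (n + 1), c k * ((1 - μ) * ((k : ℝ) - n) * rf (-x) k)
        = ∑ k ∈ Finset.range n, c k * ((1 - μ) * ((k : ℝ) - n) * rf (-x) k) := by
      rw [Finset.sum_range_succ]; simp
    have hS2 : ∑ k ∈ Finset.range (n + 1), c k * (μ * k * (γ + k - 1) * rf (-x) (k - 1))
        = ∑ k ∈ Finset.range n, c (k + 1) * (μ * (k + 1) * (γ + k) * rf (-x) k) := by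
      rw [Finset.sum_range_succ']
      simp only [rf_zero, Nat.add_sub_cancel, Nat.cast_zero, Nat.cast_add, Nat.cast_one]
      rw [show c 0 * (μ * 0 * (γ + 0 - 1) * rf (-x) (0 - 1)) = 0 by ring, add_zero]
      apply Finset.sum_congr rfl
      intro k _
      ring_nf
    rw [hS1, hS2, ← Finset.sum_add_distrib]
    apply Finset.sum_eq_zero
    intro k hk
    have hk' : k < n := Finset.mem_range.mp hk
    have h := hrec k hk'
    have hμt : μ * t = μ - 1 := by
      rw [ht]; field_simp
    have : c (k + 1) * (μ * (k + 1) * (γ + k) * rf (-x) k)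
        = μ * (c (k + 1) * ((k : ℝ) + 1) * (γ + k)) * rf (-x) k := by ring
    rw [this, h]
    have : c k * ((1 - μ) * ((k : ℝ) - n) * rf (-x) k)
          + μ * (c k * ((k : ℝ) - n) * t) * rf (-x) k
        = c k * ((k : ℝ) - n) * rf (-x) k * ((1 - μ) + μ * t) := by ring
    rw [this, hμt]
    ring
  unfold meixner
  rw [show -(x + 1) = -x - 1 by ring, show -(x - 1) = 1 - x by ring]
  have expand : ∀ y : ℝ,
      ∑ k ∈ Finset.range (n + 1),
        rf (-(n : ℝ)) k * rf y k / (rf γ k * (k.factorial : ℝ)) * (1 - 1 / μ) ^ k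
      = ∑ k ∈ Finset.range (n + 1), c k * rf y k := by
    intro y
    apply Finset.sum_congr rfl
    intro k _
    simp only [hc, ← ht]
    ring
  rw [expand (-x), expand (-x - 1), expand (1 - x)]
  simp only [Finset.mul_sum]
  rw [← Finset.sum_sub_distrib, ← Finset.sum_sub_distrib]
  have : ∀ k ∈ Finset.range (n + 1),
      (x * μ + μ * γ + x - ↑n + ↑n * μ) * (rf γ n * (μ / (μ - 1)) ^ n * (c k * rf (-x) k))
        - μ * (γ + x) * (rf γ n * (μ / (μ - 1)) ^ n * (c k * rf (-x - 1) k))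
        - x * (rf γ n * (μ / (μ - 1)) ^ n * (c k * rf (1 - x) k))
      = rf γ n * (μ / (μ - 1)) ^ n
        * (c k * ((x * μ + μ * γ + x - n + n * μ) * rf (-x) k
            - μ * (γ + x) * rf (-x - 1) k - x * rf (1 - x) k)) := by
    intro k _
    ring
  rw [Finset.sum_congr rfl this, ← Finset.mul_sum, key, mul_zero]
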